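/- arXiv:1510.00973 — 3 statements merged into one kernel-verified Lean document; each statement's English description precedes it below -/
import Mathlib

section
/- Let $q \in (1, \infty)$, $s \in [1, \infty)$ and let $\omega$ be a weight. If $\omega \in A_q \cap RH_s$, then $\omega^s \in A_{s(q-1)+1}$ with $[\omega^s]_{A_{s(q-1)+1}} \le [\omega]_{A_q}^s [\omega]_{RH_s}^s$. -/
open MeasureTheory ENNReal

/-- The Muckenhoupt `A_q` characteristic of a weight `ω` with respect to a family of balls. -/
noncomputable def apConst {α : Type*} [MeasurableSpace α] (μ : Measure α)
    (Balls : Set (Set α)) (q : ℝ) (ω : α → ℝ≥0∞) : ℝ≥0∞ :=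
  ⨆ B ∈ Balls, ((∫⁻ x in B, ω x ∂μ) / μ B) *
    ((∫⁻ x in B, ω x ^ (1 - q / (q - 1)) ∂μ) / μ B) ^ (q - 1)

/-- The reverse Hölder `RH_s` characteristic:
`[ω]_{RH_s} = sup_B (⨍_B ω^s)^{1/s} (⨍_B ω)⁻¹`. -/
noncomputable def rhConst {α : Type*} [MeasurableSpace α] (μ : Measure α)
    (Balls : Set (Set α)) (s : ℝ) (ω : α → ℝ≥0∞) : ℝ≥0∞ :=
  ⨆ B ∈ Balls, ((∫⁻ x in B, ω x ^ s ∂μ) / μ B) ^ (1 / s) /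
    ((∫⁻ x in B, ω x ∂μ) / μ B)

/-!
On a single ball write `a = ⨍ ω^s`, `b = ⨍ ω^{1-q'}`, `c = ⨍ ω`. The exponent `Q = s(q-1)+1` is
chosen so that `(ω^s)^{1-Q'} = ω^{1-q'}` and `Q - 1 = (q-1)s`; hence the `A_Q` expression of `ω^s`
on the ball is `a b^{(q-1)s} = (c b^{q-1})^s (a^{1/s}/c)^s`, the product of the `s`-th powers of
the `A_q` and `RH_s` expressions of `ω`, and taking suprema gives the bound. The identity fails
only when `c` is `0` or `∞`, and then finiteness of the two characteristics forces `a b = 0`.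
-/

namespace ENNReal

theorem mul_rpow_mul_le_of_ne_top {a b c : ℝ≥0∞} {s t : ℝ} (hs : 0 < s) (ht : 0 < t)
    (hA : c * b ^ t ≠ ⊤) (hR : a ^ (1 / s) / c ≠ ⊤) :
    a * b ^ (t * s) ≤ (c * b ^ t) ^ s * (a ^ (1 / s) / c) ^ s := by
  rcases eq_or_ne b 0 with rfl | hb0
  · rw [ENNReal.zero_rpow_of_pos (_root_.mul_pos ht hs), mul_zero]
    exact zero_le
  rcases eq_or_ne c 0 with rfl | hc0
  · obtain rfl : a = 0 := by
      by_contra ha0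
      exact hR (ENNReal.div_zero (by simp [ha0, hs, hs.le]))
    simp
  have hct : c ≠ ⊤ := by
    rintro rfl
    exact hA (ENNReal.top_mul (by simp [hb0, ht.le]))
  have hcs0 : c ^ s ≠ 0 := (ENNReal.rpow_pos (pos_iff_ne_zero.mpr hc0) hct).ne'
  have hcst : c ^ s ≠ ⊤ := ENNReal.rpow_ne_top_of_nonneg hs.le hct
  refine le_of_eq ?_
  rw [ENNReal.mul_rpow_of_nonneg _ _ hs.le, ENNReal.div_rpow_of_nonneg _ _ hs.le,
    ← ENNReal.rpow_mul b, ← ENNReal.rpow_mul a, one_div, inv_mul_cancel₀ hs.ne',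
    ENNReal.rpow_one, mul_right_comm, ENNReal.mul_div_cancel hcs0 hcst]

end ENNReal

section Characteristics

variable {α : Type*} [MeasurableSpace α] (μ : Measure α)

noncomputable def apBall (q : ℝ) (ω : α → ℝ≥0∞) (B : Set α) : ℝ≥0∞ :=
  ((∫⁻ x in B, ω x ∂μ) / μ B) * ((∫⁻ x in B, ω x ^ (1 - q / (q - 1)) ∂μ) / μ B) ^ (q - 1)

noncomputable def rhBall (s : ℝ) (ω : α → ℝ≥0∞) (B : Set α) : ℝ≥0∞ :=
  ((∫⁻ x in B, ω x ^ s ∂μ) / μ B) ^ (1 / s) / ((∫⁻ x in B, ω x ∂μ) / μ B)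

theorem apConst_eq_iSup_apBall (Balls : Set (Set α)) (q : ℝ) (ω : α → ℝ≥0∞) :
    apConst μ Balls q ω = ⨆ B ∈ Balls, apBall μ q ω B := rfl

theorem apBall_le_apConst {Balls : Set (Set α)} {B : Set α} (hB : B ∈ Balls) (q : ℝ)
    (ω : α → ℝ≥0∞) : apBall μ q ω B ≤ apConst μ Balls q ω :=
  le_biSup (apBall μ q ω) hB

theorem rhBall_le_rhConst {Balls : Set (Set α)} {B : Set α} (hB : B ∈ Balls) (s : ℝ)
    (ω : α → ℝ≥0∞) : rhBall μ s ω B ≤ rhConst μ Balls s ω :=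
  le_biSup (rhBall μ s ω) hB

theorem rpow_one_sub_conjExponent_rpow {q s : ℝ} (hq : 1 < q) (hs : 0 < s) (x : ℝ≥0∞) :
    (x ^ s) ^ (1 - (s * (q - 1) + 1) / (s * (q - 1) + 1 - 1)) = x ^ (1 - q / (q - 1)) := by
  have hq1 : q - 1 ≠ 0 := (sub_pos.mpr hq).ne'
  rw [← ENNReal.rpow_mul]
  congr 1
  field_simp
  ring

theorem apBall_rpow_le {q s : ℝ} (hq : 1 < q) (hs : 0 < s) {ω : α → ℝ≥0∞} {B : Set α}
    (hA : apBall μ q ω B ≠ ⊤) (hR : rhBall μ s ω B ≠ ⊤) :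
    apBall μ (s * (q - 1) + 1) (fun x => ω x ^ s) B ≤ apBall μ q ω B ^ s * rhBall μ s ω B ^ s := by
  have hexp : s * (q - 1) + 1 - 1 = (q - 1) * s := by ring
  simp only [apBall, rpow_one_sub_conjExponent_rpow hq hs]
  rw [hexp]
  exact ENNReal.mul_rpow_mul_le_of_ne_top hs (sub_pos.mpr hq) hA hR

end Characteristics

/-- if `ω ∈ A_q ∩ RH_s` then `ω^s ∈ A_{s(q-1)+1}` with
`[ω^s]_{A_{s(q-1)+1}} ≤ [ω]_{A_q}^s [ω]_{RH_s}^s`. -/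
theorem stmt2 {α : Type*} [MeasurableSpace α] (μ : Measure α)
    (Balls : Set (Set α)) (q s : ℝ) (hq : 1 < q) (hs : 1 ≤ s) (ω : α → ℝ≥0∞)
    (hA : apConst μ Balls q ω < ⊤) (hR : rhConst μ Balls s ω < ⊤) :
    apConst μ Balls (s * (q - 1) + 1) (fun x => ω x ^ s) < ⊤ ∧
    apConst μ Balls (s * (q - 1) + 1) (fun x => ω x ^ s)
      ≤ apConst μ Balls q ω ^ s * rhConst μ Balls s ω ^ s := by
  have hs0 : 0 < s := one_pos.trans_le hs
  have hle : apConst μ Balls (s * (q - 1) + 1) (fun x => ω x ^ s)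
      ≤ apConst μ Balls q ω ^ s * rhConst μ Balls s ω ^ s := by
    rw [apConst_eq_iSup_apBall]
    refine iSup₂_le fun B hB => ?_
    have hAB := apBall_le_apConst μ hB q ω
    have hRB := rhBall_le_rhConst μ hB s ω
    calc apBall μ (s * (q - 1) + 1) (fun x => ω x ^ s) B
        ≤ apBall μ q ω B ^ s * rhBall μ s ω B ^ s :=
          apBall_rpow_le μ hq hs0 (hAB.trans_lt hA).ne (hRB.trans_lt hR).ne
      _ ≤ apConst μ Balls q ω ^ s * rhConst μ Balls s ω ^ s := by gcongr
  refine ⟨hle.trans_lt ?_, hle⟩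
  exact ENNReal.mul_lt_top (ENNReal.rpow_lt_top_of_nonneg hs0.le hA.ne)
    (ENNReal.rpow_lt_top_of_nonneg hs0.le hR.ne)
end

section
/- On the real line, for $s > 1$ there exist constants $0 < c \le C$ such that for all sufficiently small $\varepsilon > 0$, the reverse Hölder characteristic of $w(x) = |x|^{-1/s + \varepsilon}$ satisfies $c\,\varepsilon^{-1/s} \le [w]_{RH_s} \le C\,\varepsilon^{-1/s}$. -/
open MeasureTheory ENNReal

/-- The family of bounded open intervals of `ℝ`. -/
def realIntervals : Set (Set ℝ) := {I | ∃ a b : ℝ, a < b ∧ I = Set.Ioo a b}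

/-!
Write `δ = -1/s + ε`, so that `w = |x|^δ` has `w^s = |x|^(εs - 1)`, barely integrable at `0`.
On `(0, 1)` the average of `w^s` is `1/(εs)` while that of `w` stays bounded, which gives the
lower bound. For the upper bound take `I = (a, b)` and `m = max |a| |b|`. As `δ ≤ 0`, the average
of `w` over `I` is at least `m^δ`. If `m ≤ 2|I|`, the average of `w^s` is at most its integral over
`(-m, m)` divided by `m/2`, that is `4 m^(εs-1)/(εs)`; otherwise `|x| ≥ m/2` on `I`, so
`w^s ≤ (m/2)^(εs-1) ≤ 2 m^(εs-1)` there. Either way `(⨍ w^s)^(1/s) ≤ (4/(εs))^(1/s) m^δ`.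
-/

open Set

noncomputable def rhQuotient {α : Type*} [MeasurableSpace α] (μ : Measure α) (s : ℝ)
    (ω : α → ℝ≥0∞) (B : Set α) : ℝ≥0∞ :=
  (⨍⁻ x in B, ω x ^ s ∂μ) ^ (1 / s) / ⨍⁻ x in B, ω x ∂μ

lemma rhConst_eq_iSup_rhQuotient {α : Type*} [MeasurableSpace α] (μ : Measure α)
    (Balls : Set (Set α)) (s : ℝ) (ω : α → ℝ≥0∞) :
    rhConst μ Balls s ω = ⨆ B ∈ Balls, rhQuotient μ s ω B := by
  simp only [rhConst, rhQuotient, setLAverage_eq]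

lemma ofReal_abs_rpow_rpow (x r : ℝ) {s : ℝ} (hs : 0 ≤ s) :
    ENNReal.ofReal (|x| ^ r) ^ s = ENNReal.ofReal (|x| ^ (r * s)) := by
  rw [ENNReal.ofReal_rpow_of_nonneg (by positivity) hs, Real.rpow_mul (abs_nonneg x)]

section PowerWeight

variable {a b m r : ℝ}

lemma lintegral_Ioo_zero_abs_rpow (hb : 0 ≤ b) (hr : -1 < r) :
    ∫⁻ x in Ioo 0 b, ENNReal.ofReal (|x| ^ r) = ENNReal.ofReal (b ^ (r + 1) / (r + 1)) := by
  have hint : IntegrableOn (fun x : ℝ => x ^ r) (Ioc 0 b) :=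
    (intervalIntegrable_iff_integrableOn_Ioc_of_le hb).1
      (intervalIntegral.intervalIntegrable_rpow' hr)
  rw [setLIntegral_congr_fun measurableSet_Ioo (g := fun x => ENNReal.ofReal (x ^ r))
      fun x hx => by rw [abs_of_pos hx.1],
    ← ofReal_integral_eq_lintegral_ofReal (hint.mono_set Ioo_subset_Ioc_self)
      ((ae_restrict_mem measurableSet_Ioo).mono fun x hx => Real.rpow_nonneg hx.1.le r),
    ← integral_Ioc_eq_integral_Ioo, ← intervalIntegral.integral_of_le hb,
    integral_rpow (Or.inl hr), Real.zero_rpow (by linarith), sub_zero]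

lemma lintegral_Ioo_neg_abs_rpow (hm : 0 < m) (hr : -1 < r) :
    ∫⁻ x in Ioo (-m) m, ENNReal.ofReal (|x| ^ r)
      = ENNReal.ofReal (2 * (m ^ (r + 1) / (r + 1))) := by
  have hhalf : ∫⁻ x in Ioo 0 m, ENNReal.ofReal (|x| ^ r) = ENNReal.ofReal (m ^ (r + 1) / (r + 1)) :=
    lintegral_Ioo_zero_abs_rpow hm.le hr
  have hval_nonneg : 0 ≤ m ^ (r + 1) / (r + 1) := div_nonneg (by positivity) (by linarith)
  have hneg : ∫⁻ x in Ioo (-m) 0, ENNReal.ofReal (|x| ^ r)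
      = ∫⁻ x in Ioo 0 m, ENNReal.ofReal (|x| ^ r) := by
    have h := (Measure.measurePreserving_neg (volume : Measure ℝ)).setLIntegral_comp_preimage_emb
      measurableEmbedding_neg (fun x => ENNReal.ofReal (|x| ^ r)) (Ioo 0 m)
    simpa only [abs_neg, neg_preimage, neg_Ioo, neg_zero] using h
  rw [← Ioo_union_Ico_eq_Ioo (neg_neg_of_pos hm) hm.le, lintegral_union measurableSet_Ico
      (Ico_disjoint_Ico_same.mono_left Ioo_subset_Ico_self),
    Measure.restrict_congr_set Ioo_ae_eq_Ico.symm, hneg, hhalf, two_mul,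
    ENNReal.ofReal_add hval_nonneg hval_nonneg]

lemma max_abs_pos (hab : a < b) : 0 < max |a| |b| := by
  have := le_max_left |a| |b|; have := le_max_right |a| |b|
  have := le_abs_self b; have := neg_abs_le a
  linarith

lemma Ioo_subset_Ioo_neg_max_abs : Ioo a b ⊆ Ioo (-max |a| |b|) (max |a| |b|) :=
  Ioo_subset_Ioo (neg_le.1 ((neg_le_abs a).trans (le_max_left _ _)))
    ((le_abs_self b).trans (le_max_right _ _))

lemma ofReal_max_abs_rpow_le_setLAverage (hab : a < b) (hr : r ≤ 0) :
    ENNReal.ofReal (max |a| |b| ^ r) ≤ ⨍⁻ x in Ioo a b, ENNReal.ofReal (|x| ^ r) ∂volume := by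
  rw [← setLAverage_const (μ := volume) (s := Ioo a b) (by simp [hab]) measure_Ioo_lt_top.ne
    (ENNReal.ofReal _)]
  refine laverage_mono_ae ?_
  filter_upwards [ae_restrict_mem measurableSet_Ioo, ae_restrict_of_ae (volume.ae_ne 0)]
    with x hx hx0
  exact ENNReal.ofReal_le_ofReal <| Real.rpow_le_rpow_of_nonpos (abs_pos.2 hx0)
    (abs_le_max_abs_abs hx.1.le hx.2.le) hr

lemma setLAverage_abs_rpow_le_of_max_abs_le (hab : a < b) (hr : -1 < r)
    (hnear : max |a| |b| ≤ 2 * (b - a)) :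
    ⨍⁻ x in Ioo a b, ENNReal.ofReal (|x| ^ r) ∂volume
      ≤ ENNReal.ofReal (4 / (r + 1) * max |a| |b| ^ r) := by
  set m := max |a| |b|
  have hm : 0 < m := max_abs_pos hab
  have hr1 : 0 < r + 1 := by linarith
  rw [setLAverage_eq, Real.volume_Ioo]
  calc (∫⁻ x in Ioo a b, ENNReal.ofReal (|x| ^ r)) / ENNReal.ofReal (b - a)
      ≤ ENNReal.ofReal (2 * (m ^ (r + 1) / (r + 1))) / ENNReal.ofReal (m / 2) := by
        rw [← lintegral_Ioo_neg_abs_rpow hm hr]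
        exact ENNReal.div_le_div (lintegral_mono_set Ioo_subset_Ioo_neg_max_abs)
          (ENNReal.ofReal_le_ofReal (by linarith))
    _ = ENNReal.ofReal (4 / (r + 1) * m ^ r) := by
        rw [← ENNReal.ofReal_div_of_pos (half_pos hm), Real.rpow_add_one hm.ne']
        congr 1
        field_simp
        ring

lemma setLAverage_abs_rpow_le_of_lt_max_abs (hab : a < b) (hr : r ≤ 0)
    (hfar : 2 * (b - a) < max |a| |b|) :
    ⨍⁻ x in Ioo a b, ENNReal.ofReal (|x| ^ r) ∂volume ≤ ENNReal.ofReal ((max |a| |b| / 2) ^ r) := by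
  set m := max |a| |b|
  have hm : 0 < m := max_abs_pos hab
  have hx_ge : ∀ x ∈ Ioo a b, m / 2 ≤ |x| := by
    intro x hx
    have ha := abs_sub_abs_le_abs_sub a x
    have hb := abs_sub_abs_le_abs_sub b x
    rw [abs_sub_comm, abs_of_pos (sub_pos.2 hx.1)] at ha
    rw [abs_of_pos (sub_pos.2 hx.2)] at hb
    have : m ≤ |x| + (b - a) := max_le (by linarith [hx.2]) (by linarith [hx.1])
    linarith
  rw [← setLAverage_const (μ := volume) (s := Ioo a b) (by simp [hab]) measure_Ioo_lt_top.ne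
    (ENNReal.ofReal _)]
  refine laverage_mono_ae ?_
  filter_upwards [ae_restrict_mem measurableSet_Ioo] with x hx
  exact ENNReal.ofReal_le_ofReal <| Real.rpow_le_rpow_of_nonpos (half_pos hm) (hx_ge x hx) hr

lemma setLAverage_abs_rpow_le (hab : a < b) (hr : -1 < r) (hr0 : r ≤ 0) :
    ⨍⁻ x in Ioo a b, ENNReal.ofReal (|x| ^ r) ∂volume
      ≤ ENNReal.ofReal (4 / (r + 1) * max |a| |b| ^ r) := by
  rcases le_or_gt (max |a| |b|) (2 * (b - a)) with hnear | hfar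
  · exact setLAverage_abs_rpow_le_of_max_abs_le hab hr hnear
  refine (setLAverage_abs_rpow_le_of_lt_max_abs hab hr0 hfar).trans (ENNReal.ofReal_le_ofReal ?_)
  have hm := max_abs_pos hab
  have h2 : (2 : ℝ) ^ (-r) ≤ 2 := by
    simpa using Real.rpow_le_rpow_of_exponent_le one_le_two (show -r ≤ 1 by linarith)
  have h4 : 2 ≤ 4 / (r + 1) := by rw [le_div_iff₀ (by linarith)]; linarith
  rw [Real.div_rpow hm.le zero_le_two, div_eq_mul_inv, mul_comm, ← Real.rpow_neg zero_le_two]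
  gcongr
  linarith

end PowerWeight

section ReverseHolder

variable {s δ : ℝ}

lemma rhQuotient_Ioo_abs_rpow_le {a b : ℝ} (hab : a < b) (hs : 0 < s) (hδs : -1 < δ * s)
    (hδ : δ ≤ 0) :
    rhQuotient volume s (fun x => ENNReal.ofReal (|x| ^ δ)) (Ioo a b)
      ≤ ENNReal.ofReal ((4 / (δ * s + 1)) ^ (1 / s)) := by
  set m := max |a| |b|
  have hm : 0 < m := max_abs_pos hab
  have hK : 0 ≤ 4 / (δ * s + 1) := div_nonneg zero_le_four (by linarith)
  refine ENNReal.div_le_of_le_mul ?_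
  calc (⨍⁻ x in Ioo a b, ENNReal.ofReal (|x| ^ δ) ^ s ∂volume) ^ (1 / s)
      = (⨍⁻ x in Ioo a b, ENNReal.ofReal (|x| ^ (δ * s)) ∂volume) ^ (1 / s) := by
        simp_rw [ofReal_abs_rpow_rpow _ _ hs.le]
    _ ≤ ENNReal.ofReal (4 / (δ * s + 1) * m ^ (δ * s)) ^ (1 / s) := by
        gcongr
        exact setLAverage_abs_rpow_le hab hδs (mul_nonpos_of_nonpos_of_nonneg hδ hs.le)
    _ = ENNReal.ofReal ((4 / (δ * s + 1)) ^ (1 / s)) * ENNReal.ofReal (m ^ δ) := by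
        rw [ENNReal.ofReal_rpow_of_nonneg (by positivity) (by positivity),
          Real.mul_rpow hK (by positivity), ← Real.rpow_mul hm.le, mul_assoc,
          mul_one_div_cancel hs.ne', mul_one, ENNReal.ofReal_mul (by positivity)]
    _ ≤ ENNReal.ofReal ((4 / (δ * s + 1)) ^ (1 / s)) *
          ⨍⁻ x in Ioo a b, ENNReal.ofReal (|x| ^ δ) ∂volume := by
        gcongr
        exact ofReal_max_abs_rpow_le_setLAverage hab hδ

lemma rhQuotient_Ioo_zero_one_abs_rpow (hs : 0 < s) (hδ : -1 < δ) (hδs : -1 < δ * s) :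
    rhQuotient volume s (fun x => ENNReal.ofReal (|x| ^ δ)) (Ioo 0 1)
      = ENNReal.ofReal ((δ + 1) * (1 / (δ * s + 1)) ^ (1 / s)) := by
  have hδ1 : 0 < δ + 1 := by linarith
  have hδs1 : 0 < δ * s + 1 := by linarith
  simp_rw [rhQuotient, ofReal_abs_rpow_rpow _ _ hs.le]
  rw [setLAverage_eq, setLAverage_eq, Real.volume_Ioo, sub_zero, ENNReal.ofReal_one, div_one,
    div_one, lintegral_Ioo_zero_abs_rpow zero_le_one hδs,
    lintegral_Ioo_zero_abs_rpow zero_le_one hδ,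
    Real.one_rpow, Real.one_rpow, ENNReal.ofReal_rpow_of_nonneg (by positivity) (by positivity),
    ← ENNReal.ofReal_div_of_pos (by positivity)]
  congr 1
  field_simp

lemma ofReal_le_rhConst_abs_rpow (hs : 0 < s) (hδ : -1 < δ) (hδs : -1 < δ * s) :
    ENNReal.ofReal ((δ + 1) * (1 / (δ * s + 1)) ^ (1 / s))
      ≤ rhConst volume realIntervals s (fun x => ENNReal.ofReal (|x| ^ δ)) := by
  rw [rhConst_eq_iSup_rhQuotient, ← rhQuotient_Ioo_zero_one_abs_rpow hs hδ hδs]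
  exact le_iSup₂_of_le (Ioo 0 1) ⟨0, 1, one_pos, rfl⟩ le_rfl

lemma rhConst_abs_rpow_le (hs : 0 < s) (hδs : -1 < δ * s) (hδ : δ ≤ 0) :
    rhConst volume realIntervals s (fun x => ENNReal.ofReal (|x| ^ δ))
      ≤ ENNReal.ofReal ((4 / (δ * s + 1)) ^ (1 / s)) := by
  rw [rhConst_eq_iSup_rhQuotient]
  refine iSup₂_le ?_
  rintro _ ⟨a, b, hab, rfl⟩
  exact rhQuotient_Ioo_abs_rpow_le hab hs hδs hδ

end ReverseHolder

lemma div_mul_rpow_one_div {x ε s : ℝ} (hx : 0 ≤ x) (hε : 0 ≤ ε) (hs : 0 ≤ s) :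
    (x / (ε * s)) ^ (1 / s) = (x / s) ^ (1 / s) * ε ^ (-(1 / s)) := by
  rw [div_mul_eq_div_div_swap, Real.div_rpow (div_nonneg hx hs) hε, Real.rpow_neg hε,
    div_eq_mul_inv]

/-- for `s > 1`, `[|x|^{-1/s+ε}]_{RH_s} ≍ ε^{-1/s}` as `ε → 0`. -/
theorem stmt5 (s : ℝ) (hs : 1 < s) :
    ∃ c C : ℝ, 0 < c ∧ c ≤ C ∧ ∃ ε₀ > (0:ℝ), ∀ ε : ℝ, 0 < ε → ε < ε₀ →
      ENNReal.ofReal (c * ε ^ (-(1/s)))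
          ≤ rhConst volume realIntervals s (fun x => ENNReal.ofReal (|x| ^ (-(1/s) + ε))) ∧
      rhConst volume realIntervals s (fun x => ENNReal.ofReal (|x| ^ (-(1/s) + ε)))
          ≤ ENNReal.ofReal (C * ε ^ (-(1/s))) := by
  have hs0 : 0 < s := by linarith
  have hs1 : 1 / s < 1 := (div_lt_one hs0).2 hs
  have hs1' : 0 < 1 / s := by positivity
  refine ⟨(1 - 1 / s) * (1 / s) ^ (1 / s), (4 / s) ^ (1 / s), ?_, ?_, 1 / s, hs1',
    fun ε hε hεs => ?_⟩
  · exact mul_pos (by linarith) (by positivity)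
  · calc (1 - 1 / s) * (1 / s) ^ (1 / s) ≤ 1 * (1 / s) ^ (1 / s) := by gcongr; linarith
      _ ≤ (4 / s) ^ (1 / s) := by rw [one_mul]; gcongr; norm_num
  have hδs : (-(1 / s) + ε) * s + 1 = ε * s := by field_simp; ring
  have hεs0 : 0 < ε * s := mul_pos hε hs0
  constructor
  · refine le_trans (ENNReal.ofReal_le_ofReal ?_)
      (ofReal_le_rhConst_abs_rpow hs0 (by linarith) (by linarith))
    rw [hδs, div_mul_rpow_one_div zero_le_one hε.le hs0.le, ← mul_assoc]
    gcongr
    linarith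
  · refine (rhConst_abs_rpow_le hs0 (by linarith) (by linarith)).trans_eq ?_
    rw [hδs, div_mul_rpow_one_div zero_le_four hε.le hs0.le]
end

section
/- Lower bound for sparse form on power functions: let $1 \le p_0 < q_0' < \infty$ with $q_0'/p_0' < 1$, and for $\varepsilon \in (0, 1/2)$ set $f_\varepsilon(x) = x^{-1/p_0+\varepsilon}\chi_{[0,1]}$ and $g_\varepsilon(x) = x^{-1/p_0'+\varepsilon}\chi_{[0,1]}$. Then with $\mathcal{S} = \{[0,2^{-n}] : n \ge 0\}$ there is a constant $c > 0$ (independent of $\varepsilon$) such that $\sum_{I \in \mathcal{S}} |I|\, \langle |f_\varepsilon|^{p_0}\rangle_I^{1/p_0}\, \langle |g_\varepsilon|^{q_0'}\rangle_I^{1/q_0'} \ge c\, \varepsilon^{-1/p_0}\varepsilon^{-1}$. -/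
/-!
On `I = [0, T]` the averages of powers are explicit: `⟨(x^b)^p⟩_I^{1/p} = (bp + 1)^{-1/p} T^b`.
For `I_n = [0, 2^{-n}]` the exponents of `f_ε` and `g_ε` add up with `|I_n|` to `2ε`, so the
`n`-th term of the sparse form is `(p₀ε)^{-1/p₀} C_ε 4^{-nε}` with `C_ε` bounded below uniformly in
`ε < 1/2` (`q₀'/p₀' < 1` makes `g_ε^{q₀'}` integrable), and the geometric series `∑ 4^{-nε}` is at
least `(2 ε log 2)⁻¹` because `1 - e^{-t} ≤ t`.
-/

open MeasureTheory Real Set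

lemma setIntegral_Ioc_rpow {T a : ℝ} (hT : 0 < T) (ha : -1 < a) :
    ∫ x in Ioc 0 T, x ^ a = T ^ (a + 1) / (a + 1) := by
  rw [← intervalIntegral.integral_of_le hT.le, integral_rpow (Or.inl ha),
    zero_rpow (by linarith), sub_zero]

lemma average_Ioc_rpow_rpow {T b p : ℝ} (hT : 0 < T) (hp : 0 < p) (hbp : -1 < b * p) :
    (T⁻¹ * ∫ x in Ioc 0 T, (x ^ b) ^ p) ^ (1 / p) = (b * p + 1) ^ (-(1 / p)) * T ^ b := by
  have hpow : ∫ x in Ioc 0 T, (x ^ b) ^ p = ∫ x in Ioc 0 T, x ^ (b * p) :=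
    setIntegral_congr_fun measurableSet_Ioc fun x hx => (rpow_mul hx.1.le b p).symm
  have hc : 0 < b * p + 1 := by linarith
  have hT' : T⁻¹ * T ^ (b * p + 1) = T ^ (b * p) := by
    rw [rpow_add_one hT.ne', mul_comm, mul_assoc, mul_inv_cancel₀ hT.ne', mul_one]
  rw [hpow, setIntegral_Ioc_rpow hT hbp, ← mul_div_assoc, hT', div_eq_inv_mul,
    mul_rpow (inv_nonneg.2 hc.le) (rpow_nonneg hT.le _), ← rpow_mul hT.le,
    show b * p * (1 / p) = b by field_simp, inv_rpow hc.le, rpow_neg hc.le]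

lemma two_zpow_neg_rpow (n : ℕ) (s : ℝ) : ((2:ℝ) ^ (-(n:ℤ))) ^ s = ((2:ℝ) ^ (-s)) ^ n := by
  rw [← rpow_intCast, ← rpow_mul zero_le_two, ← rpow_natCast, ← rpow_mul zero_le_two]
  push_cast; ring_nf

lemma two_zpow_mul_average_mul_average (n : ℕ) {p q b₁ b₂ s : ℝ} (hp : 0 < p) (hq : 0 < q)
    (hb₁ : -1 < b₁ * p) (hb₂ : -1 < b₂ * q) (hs : 1 + b₁ + b₂ = s) :
    (2:ℝ) ^ (-(n:ℤ)) *
        ((2:ℝ) ^ n * ∫ x in Ioc (0:ℝ) ((2:ℝ) ^ (-(n:ℤ))), (x ^ b₁) ^ p) ^ (1 / p) *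
        ((2:ℝ) ^ n * ∫ x in Ioc (0:ℝ) ((2:ℝ) ^ (-(n:ℤ))), (x ^ b₂) ^ q) ^ (1 / q) =
      (b₁ * p + 1) ^ (-(1 / p)) * (b₂ * q + 1) ^ (-(1 / q)) * ((2:ℝ) ^ (-s)) ^ n := by
  have hT : (0:ℝ) < 2 ^ (-(n:ℤ)) := zpow_pos two_pos _
  have h2n : (2:ℝ) ^ n = (2 ^ (-(n:ℤ)))⁻¹ := by simp
  have hTs : (2:ℝ) ^ (-(n:ℤ)) * (2 ^ (-(n:ℤ))) ^ b₁ * (2 ^ (-(n:ℤ))) ^ b₂ = (2 ^ (-s)) ^ n := by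
    rw [← two_zpow_neg_rpow, ← hs, rpow_add hT, rpow_add hT, rpow_one]
  rw [h2n, average_Ioc_rpow_rpow hT hp hb₁, average_Ioc_rpow_rpow hT hq hb₂, ← hTs]
  ring

lemma one_sub_two_rpow_neg_le (s : ℝ) : 1 - (2:ℝ) ^ (-s) ≤ log 2 * s := by
  have h := add_one_le_exp (log 2 * -s)
  rw [← rpow_def_of_pos two_pos] at h
  linarith

lemma inv_log_two_mul_le_tsum_two_rpow_neg_pow {s : ℝ} (hs : 0 < s) :
    (log 2 * s)⁻¹ ≤ ∑' n : ℕ, ((2:ℝ) ^ (-s)) ^ n := by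
  have hr : (2:ℝ) ^ (-s) < 1 := rpow_lt_one_of_one_lt_of_neg one_lt_two (neg_neg_of_pos hs)
  rw [tsum_geometric_of_lt_one (rpow_nonneg zero_le_two _) hr]
  exact inv_anti₀ (sub_pos.2 hr) (one_sub_two_rpow_neg_le s)

/-- lower bound for the sparse form on power functions. With
`f_ε(x) = x^{-1/p₀+ε}` and `g_ε(x) = x^{-1/p₀'+ε}` on `[0,1]` (so `1/p₀' = 1 - 1/p₀`),
and the sparse collection `S = {[0, 2^{-n}]}`, the sparse form
`∑_n |I_n| ⟨f_ε^{p₀}⟩_{I_n}^{1/p₀} ⟨g_ε^{q₀'}⟩_{I_n}^{1/q₀'}` is bounded below by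
`c ε^{-1/p₀} ε⁻¹`, provided `1 ≤ p₀ < q₀' < ∞` and `q₀'/p₀' < 1`. -/
theorem stmt17 (p0 q0c : ℝ) (hp0 : 1 ≤ p0) (hlt : p0 < q0c)
    (hcond : q0c * (1 - 1 / p0) < 1) :
    ∃ c > (0:ℝ), ∀ ε : ℝ, 0 < ε → ε < 1/2 →
      c * ε ^ (-(1/p0)) * ε⁻¹ ≤
        ∑' n : ℕ, (2:ℝ) ^ (-(n:ℤ)) *
          (((2:ℝ) ^ (n:ℕ) *
            ∫ x in Set.Ioc (0:ℝ) ((2:ℝ) ^ (-(n:ℤ))), (x ^ (-(1/p0) + ε)) ^ p0)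
              ^ (1/p0)) *
          (((2:ℝ) ^ (n:ℕ) *
            ∫ x in Set.Ioc (0:ℝ) ((2:ℝ) ^ (-(n:ℤ))), (x ^ (-(1 - 1/p0) + ε)) ^ q0c)
              ^ (1/q0c)) := by
  have hp : 0 < p0 := by linarith
  have hq : 0 < q0c := by linarith
  have hconj : 0 ≤ 1 - 1 / p0 := by rw [sub_nonneg, div_le_one hp]; exact hp0
  refine ⟨p0 ^ (-(1 / p0)) * (1 + q0c / 2) ^ (-(1 / q0c)) * (log 2 * 2)⁻¹,
    by positivity, fun ε hε hε2 => ?_⟩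
  have hf : (-(1 / p0) + ε) * p0 + 1 = p0 * ε := by field_simp; ring
  have hg_pos : 0 < (-(1 - 1 / p0) + ε) * q0c + 1 := by nlinarith
  have hg_le : (-(1 - 1 / p0) + ε) * q0c + 1 ≤ 1 + q0c / 2 := by nlinarith
  rw [tsum_congr fun n => two_zpow_mul_average_mul_average n hp hq (by nlinarith)
    (by linarith) (show 1 + (-(1 / p0) + ε) + (-(1 - 1 / p0) + ε) = 2 * ε by ring),
    tsum_mul_left, hf, mul_rpow hp.le hε.le]
  have hg : (1 + q0c / 2) ^ (-(1 / q0c)) ≤ ((-(1 - 1 / p0) + ε) * q0c + 1) ^ (-(1 / q0c)) :=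
    rpow_le_rpow_of_nonpos hg_pos hg_le (by simp [hq.le])
  have hsum := inv_log_two_mul_le_tsum_two_rpow_neg_pow (by positivity : 0 < 2 * ε)
  calc p0 ^ (-(1 / p0)) * (1 + q0c / 2) ^ (-(1 / q0c)) * (log 2 * 2)⁻¹ * ε ^ (-(1 / p0)) *
        ε⁻¹
      = p0 ^ (-(1 / p0)) * ε ^ (-(1 / p0)) * (1 + q0c / 2) ^ (-(1 / q0c)) *
          (log 2 * (2 * ε))⁻¹ := by
        rw [← mul_assoc, mul_inv]; ring
    _ ≤ _ := by gcongr
end
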